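/- arXiv:0710.2088 — 2 statements merged into one kernel-verified Lean document; each statement's English description precedes it below -/
import Mathlib

section
/- Let q = p^d be a prime power, let n be an odd prime, and let v : ZMod n → F_q be the arithmetic logarithm. Then v is a most complicated point for every translation-invariant linear operator A on F_q^n if and only if: either n = 4k+3 for some natural number k with gcd(q, k+1) = 1 and gcd(q, 2k+1) = 1, or n = 4k+1 for some natural number k with gcd(q, 2k) = 1. -/
/-!
Identify `F^n` with the group algebra `F[ℤ/n]`. The shift is multiplication by a group element,
so translation-invariant operators commute with every multiplication operator, and `v` becomes
`arithLog = ∑_{a nonresidue} [a]`. If `arithLog` is a unit, every `y` is the image of `v` under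
multiplication by `y · v⁻¹`, which commutes with `A`; so no orbit is more complicated than that of
`v`. If it is not a unit and `n ≠ 0` in `F`, Maschke's theorem makes `F[ℤ/n]` semisimple, so
`v = e v` for an idempotent `e ≠ 1`: under multiplication by `e` the point `v` is fixed while `1`
has preperiod `1`.

`arithLog` is a unit iff no character `ψ` of `ℤ/n` (with values in an extension of `F`) kills it,
i.e. iff `η₁ ψ = ∑_{a nonresidue} ψ a` never vanishes. For `ψ = 1` this is `(n - 1) / 2`. For
`ψ ≠ 1`, `η₀ ψ * η₁ ψ = N 0 - N 1`, where `N s` counts pairs (residue, nonresidue) with sum `s`,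
and twisting `ψ` by a nonresidue swaps `η₀` and `η₁`. Counting gives `N 0 - N 1 = -k` for
`n = 4k+1` and `k + 1` for `n = 4k+3`.
-/

open Function Polynomial Finset

/-- The preperiod of the orbit of `x` under `T`: the least `s ≥ 0` such that
`T^[s+t] x = T^[s] x` for some `t ≥ 1`. -/
noncomputable def orbitPreperiod {S : Type*} (T : S → S) (x : S) : ℕ :=
  sInf {s | ∃ t, 1 ≤ t ∧ T^[s + t] x = T^[s] x}

/-- The (eventual) period of the orbit of `x` under `T`: the least `t ≥ 1` such that
`T^[s+t] x = T^[s] x` for some `s ≥ 0`. -/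
noncomputable def orbitPeriod {S : Type*} (T : S → S) (x : S) : ℕ :=
  sInf {t | 1 ≤ t ∧ ∃ s, T^[s + t] x = T^[s] x}

/-- `x` is most complicated for `T` if both its period and its preperiod are maximal. -/
def MostComplicated {S : Type*} [Fintype S] (T : S → S) (x : S) : Prop :=
  orbitPeriod T x = Finset.univ.sup (fun y => orbitPeriod T y) ∧
  orbitPreperiod T x = Finset.univ.sup (fun y => orbitPreperiod T y)

/-- `x` is almost most complicated for `T` if its period is maximal and its preperiod
equals the maximal preperiod minus one. -/
def AlmostMostComplicated {S : Type*} [Fintype S] (T : S → S) (x : S) : Prop :=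
  orbitPeriod T x = Finset.univ.sup (fun y => orbitPeriod T y) ∧
  orbitPreperiod T x = Finset.univ.sup (fun y => orbitPreperiod T y) - 1

/-- The cyclic shift operator `δ` on `F^n`: `(δ x) i = x (i+1)`. -/
def shiftOp (F : Type*) [Field F] (n : ℕ) : (ZMod n → F) →ₗ[F] (ZMod n → F) where
  toFun x := fun i => x (i + 1)
  map_add' _ _ := rfl
  map_smul' _ _ := rfl

section Dynamics

variable {S : Type*} {T : S → S}

variable (T) in
lemma exists_iterate_add_eq [Finite S] (x : S) :
    ∃ s t, 1 ≤ t ∧ T^[s + t] x = T^[s] x := by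
  obtain ⟨a, b, hab, heq⟩ := Finite.exists_ne_map_eq_of_infinite fun m : ℕ ↦ T^[m] x
  rcases hab.lt_or_gt with h | h
  · exact ⟨a, b - a, by omega, by rw [Nat.add_sub_cancel' h.le]; exact heq.symm⟩
  · exact ⟨b, a - b, by omega, by rw [Nat.add_sub_cancel' h.le]; exact heq⟩

lemma orbitPeriod_le_of_iterate_imp [Finite S] {x y : S}
    (h : ∀ s t, T^[s + t] x = T^[s] x → T^[s + t] y = T^[s] y) :
    orbitPeriod T y ≤ orbitPeriod T x := by
  obtain ⟨s, t, ht, hst⟩ := exists_iterate_add_eq T x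
  obtain ⟨hx1, s', hs'⟩ := Nat.sInf_mem (s := {t | 1 ≤ t ∧ ∃ s, T^[s + t] x = T^[s] x})
    ⟨t, ht, s, hst⟩
  exact Nat.sInf_le ⟨hx1, s', h _ _ hs'⟩

lemma orbitPreperiod_le_of_iterate_imp [Finite S] {x y : S}
    (h : ∀ s t, T^[s + t] x = T^[s] x → T^[s + t] y = T^[s] y) :
    orbitPreperiod T y ≤ orbitPreperiod T x := by
  obtain ⟨s, t, ht, hst⟩ := exists_iterate_add_eq T x
  obtain ⟨t', ht', hs'⟩ := Nat.sInf_mem (s := {s | ∃ t, 1 ≤ t ∧ T^[s + t] x = T^[s] x})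
    ⟨s, t, ht, hst⟩
  exact Nat.sInf_le ⟨t', ht', h _ _ hs'⟩

lemma mostComplicated_iff_forall_le [Fintype S] {x : S} :
    MostComplicated T x ↔ ∀ y, orbitPeriod T y ≤ orbitPeriod T x ∧
      orbitPreperiod T y ≤ orbitPreperiod T x := by
  simp only [MostComplicated, le_antisymm_iff, Finset.sup_le_iff, Finset.mem_univ,
    forall_const, Finset.le_sup (Finset.mem_univ x), true_and, forall_and]

lemma mostComplicated_of_forall_exists_commute [Fintype S] {x : S}
    (h : ∀ y, ∃ B : S → S, Function.Commute B T ∧ B x = y) : MostComplicated T x := by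
  refine mostComplicated_iff_forall_le.mpr fun y ↦ ?_
  obtain ⟨B, hB, rfl⟩ := h y
  have hxy : ∀ s t, T^[s + t] x = T^[s] x → T^[s + t] (B x) = T^[s] (B x) := fun s t hst ↦ by
    rw [← (hB.iterate_right _).eq, ← (hB.iterate_right _).eq, hst]
  exact ⟨orbitPeriod_le_of_iterate_imp hxy, orbitPreperiod_le_of_iterate_imp hxy⟩

lemma orbitPreperiod_eq_zero_iff [Finite S] {x : S} :
    orbitPreperiod T x = 0 ↔ ∃ t, 1 ≤ t ∧ T^[t] x = x := by
  obtain ⟨s, t, ht, hst⟩ := exists_iterate_add_eq T x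
  rw [orbitPreperiod, Nat.sInf_eq_zero]
  simp only [Set.mem_ofPred_eq, zero_add, Function.iterate_zero_apply, or_iff_left_iff_imp]
  intro h
  exact absurd h (Set.nonempty_iff_ne_empty.mp ⟨s, t, ht, hst⟩)

lemma not_mostComplicated_of_idempotent [Fintype S] {x w : S} (hT : ∀ y, T (T y) = T y)
    (hx : T x = x) (hw : T w ≠ w) : ¬ MostComplicated T x := by
  have hiter : ∀ t, 1 ≤ t → T^[t] w = T w := by
    intro t ht
    induction t, ht using Nat.le_induction with
    | base => rfl
    | succ t _ ih => rw [Function.iterate_succ_apply', ih, hT]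
  have hx0 : orbitPreperiod T x = 0 := orbitPreperiod_eq_zero_iff.mpr ⟨1, le_rfl, hx⟩
  have hw0 : orbitPreperiod T w ≠ 0 := by
    rw [Ne, orbitPreperiod_eq_zero_iff]
    rintro ⟨t, ht, htw⟩
    exact hw (hiter t ht ▸ htw)
  intro hmc
  exact hw0 (Nat.le_zero.mp (hx0 ▸ (mostComplicated_iff_forall_le.mp hmc w).2))

end Dynamics

section GroupAlgebra

open AddMonoidAlgebra

variable {F : Type*} [Field F] {n : ℕ} [NeZero n]

variable (F n) in
noncomputable def coeffFunEquiv : F[ZMod n] ≃ₗ[F] (ZMod n → F) :=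
  (coeffLinearEquiv F).trans (Finsupp.linearEquivFunOnFinite F F (ZMod n))

variable (F n) in
noncomputable def convOp : F[ZMod n] →ₐ[F] Module.End F (ZMod n → F) :=
  ((coeffFunEquiv F n).conjAlgEquiv F).toAlgHom.comp (Algebra.lmul F F[ZMod n])

lemma convOp_apply (r : F[ZMod n]) (y : ZMod n → F) :
    convOp F n r y = coeffFunEquiv F n (r * (coeffFunEquiv F n).symm y) := rfl

lemma shiftOp_eq_convOp : shiftOp F n = convOp F n (single (-1) 1) := by
  refine LinearMap.ext fun y ↦ funext fun i ↦ ?_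
  simp [shiftOp, convOp_apply, coeffFunEquiv, coeff_single_mul_apply, add_comm]

lemma commute_convOp {A : Module.End F (ZMod n → F)}
    (hA : A ∘ₗ shiftOp F n = shiftOp F n ∘ₗ A) (r : F[ZMod n]) :
    Commute A (convOp F n r) := by
  induction r using AddMonoidAlgebra.induction_linear with
  | zero => rw [map_zero]; exact Commute.zero_right A
  | add r s hr hs => rw [map_add]; exact hr.add_right hs
  | single a c =>
    have : single a c = c • single (-1 : ZMod n) (1 : F) ^ (-a).val := by
      rw [single_pow, one_pow, nsmul_eq_mul, ZMod.natCast_val, ZMod.cast_id', id, mul_neg_one,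
        neg_neg, smul_single, smul_eq_mul, mul_one]
    rw [this, map_smul, map_pow, ← shiftOp_eq_convOp]
    exact ((show Commute A (shiftOp F n) from hA).pow_right _).smul_right c

end GroupAlgebra

section Units

open AddMonoidAlgebra

universe u

lemma exists_isIdempotentElem_mul_eq_of_not_isUnit {R : Type*} [CommRing R] [IsSemisimpleRing R]
    {x : R} (hx : ¬ IsUnit x) : ∃ e : R, IsIdempotentElem e ∧ e * x = x ∧ e ≠ 1 := by
  obtain ⟨e, he, hspan⟩ := IsSemisimpleRing.ideal_eq_span_idempotent (Ideal.span {x})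
  obtain ⟨a, rfl⟩ := Ideal.mem_span_singleton'.mp (hspan ▸ Ideal.mem_span_singleton_self x)
  refine ⟨e, he, by rw [mul_comm, mul_assoc, he.eq], ?_⟩
  rintro rfl
  exact hx (Ideal.span_singleton_eq_top.mp (hspan.trans Ideal.span_singleton_one))

lemma AddMonoidAlgebra.isUnit_iff_forall_lift_ne_zero {F G : Type u} [Field F]
    [AddCommMonoid G] {x : F[G]} :
    IsUnit x ↔ ∀ (K : Type u) [Field K] [Algebra F K] (ψ : AddChar G K),
      lift F K G ψ.toMonoidHom x ≠ 0 := by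
  refine ⟨fun hx K _ _ ψ ↦ (hx.map _).ne_zero, fun h ↦ ?_⟩
  by_contra hx
  obtain ⟨m, hm, hxm⟩ := exists_max_ideal_of_mem_nonunits hx
  let _ := Ideal.Quotient.field m
  let ψ : AddChar G (F[G] ⧸ m) :=
    AddChar.toMonoidHomEquiv.symm ((lift F _ G).symm (Ideal.Quotient.mkₐ F m))
  refine h _ ψ ?_
  rw [show ψ.toMonoidHom = (lift F _ G).symm (Ideal.Quotient.mkₐ F m) from
    AddChar.toMonoidHomEquiv.apply_symm_apply _, Equiv.apply_symm_apply]
  exact Ideal.Quotient.eq_zero_iff_mem.mpr hxm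

end Units

section ConvolutionDynamics

open AddMonoidAlgebra

variable {F : Type*} [Field F] [Fintype F] {n : ℕ} [NeZero n]

lemma mostComplicated_of_isUnit {x : F[ZMod n]} (hx : IsUnit x) (A : Module.End F (ZMod n → F))
    (hA : A ∘ₗ shiftOp F n = shiftOp F n ∘ₗ A) :
    MostComplicated (fun y ↦ A y) (coeffFunEquiv F n x) := by
  obtain ⟨u, rfl⟩ := hx
  refine mostComplicated_of_forall_exists_commute fun y ↦ ?_
  refine ⟨convOp F n ((coeffFunEquiv F n).symm y * ↑u⁻¹), fun z ↦ ?_, ?_⟩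
  · have := LinearMap.congr_fun (commute_convOp hA ((coeffFunEquiv F n).symm y * ↑u⁻¹)).eq z
    rw [Module.End.mul_apply, Module.End.mul_apply] at this
    exact this.symm
  · simp [convOp_apply]

lemma isUnit_of_forall_mostComplicated (hn : (n : F) ≠ 0) {x : F[ZMod n]}
    (h : ∀ A : Module.End F (ZMod n → F), A ∘ₗ shiftOp F n = shiftOp F n ∘ₗ A →
      MostComplicated (fun y ↦ A y) (coeffFunEquiv F n x)) : IsUnit x := by
  -- Maschke's theorem: `F[ℤ/n]` is semisimple
  have : NeZero (Nat.card (ZMod n) : F) := ⟨by rwa [Nat.card_zmod]⟩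
  by_contra hx
  obtain ⟨e, he, hex, he1⟩ := exists_isIdempotentElem_mul_eq_of_not_isUnit hx
  have hcomm : convOp F n e ∘ₗ shiftOp F n = shiftOp F n ∘ₗ convOp F n e := by
    rw [shiftOp_eq_convOp]
    exact ((Commute.all _ _).map (convOp F n)).eq
  refine not_mostComplicated_of_idempotent (w := coeffFunEquiv F n 1) (fun y ↦ ?_) ?_ ?_
    (h _ hcomm)
  · simp [convOp_apply, ← mul_assoc, he.eq]
  · simp [convOp_apply, hex]
  · simpa [convOp_apply] using he1

end ConvolutionDynamics

section PairCount

variable (n : ℕ) [Fact n.Prime]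

def quadResidues : Finset (ZMod n) := univ.filter (quadraticChar (ZMod n) · = 1)

def quadNonresidues : Finset (ZMod n) := univ.filter (quadraticChar (ZMod n) · = -1)

def pairCount (s : ZMod n) : ℕ :=
  #((quadResidues n ×ˢ quadNonresidues n).filter (fun x ↦ x.1 + x.2 = s))

variable {n}

@[simp] lemma mem_quadResidues {a : ZMod n} :
    a ∈ quadResidues n ↔ quadraticChar (ZMod n) a = 1 := by
  simp [quadResidues]

@[simp] lemma mem_quadNonresidues {a : ZMod n} :
    a ∈ quadNonresidues n ↔ quadraticChar (ZMod n) a = -1 := by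
  simp [quadNonresidues]

lemma exists_quadraticChar_eq_neg_one (hn : Odd n) :
    ∃ b : ZMod n, quadraticChar (ZMod n) b = -1 :=
  quadraticChar_exists_neg_one <| by
    rw [ZMod.ringChar_zmod_n]; rintro rfl; exact absurd hn (by decide)

lemma card_quadResidues_eq_card_quadNonresidues (hn : Odd n) :
    #(quadResidues n) = #(quadNonresidues n) := by
  obtain ⟨b, hb⟩ := exists_quadraticChar_eq_neg_one hn
  have hb0 : b ≠ 0 := by rintro rfl; simp at hb
  refine card_equiv (Equiv.mulLeft₀ b hb0) fun a ↦ ?_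
  simp only [mem_quadResidues, mem_quadNonresidues, Equiv.mulLeft₀_apply, map_mul, hb]
  omega

lemma card_quadResidues_add_card_quadNonresidues :
    #(quadResidues n) + #(quadNonresidues n) = n - 1 := by
  rw [← card_union_of_disjoint (disjoint_left.mpr fun a h1 h2 ↦ by simp_all)]
  have : quadResidues n ∪ quadNonresidues n = univ.erase 0 := by
    ext a
    simp only [mem_union, mem_quadResidues, mem_quadNonresidues, mem_erase, mem_univ, and_true]
    exact ⟨by rintro (h | h) rfl <;> simp at h, quadraticChar_dichotomy⟩
  rw [this, card_erase_of_mem (mem_univ _), card_univ, ZMod.card]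

lemma card_quadNonresidues (hn : Odd n) : #(quadNonresidues n) = (n - 1) / 2 := by
  have := card_quadResidues_add_card_quadNonresidues (n := n)
  rw [card_quadResidues_eq_card_quadNonresidues hn] at this
  omega

lemma card_quadResidues (hn : Odd n) : #(quadResidues n) = (n - 1) / 2 := by
  rw [card_quadResidues_eq_card_quadNonresidues hn, card_quadNonresidues hn]

lemma pairCount_mul {u : ZMod n} (hu : u ≠ 0) (s : ZMod n) :
    pairCount n (u * s) = pairCount n s := by
  let e := Equiv.mulLeft₀ u hu
  symm
  rcases quadraticChar_dichotomy hu with h | h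
  · refine card_equiv (e.prodCongr e) fun x ↦ ?_
    simp [e, map_mul, h, ← mul_add, hu]
  · refine card_equiv ((Equiv.prodComm _ _).trans (e.prodCongr e)) fun x ↦ ?_
    simp only [mem_filter, mem_product, mem_quadResidues, mem_quadNonresidues, Equiv.coe_trans,
      comp_apply, Equiv.prodComm_apply, Prod.fst_swap, Prod.snd_swap, Equiv.prodCongr_apply,
      Prod.map_fst, Prod.map_snd, e, Equiv.mulLeft₀_apply, map_mul, h, ← mul_add, add_comm x.2,
      mul_right_inj' hu, neg_one_mul, neg_eq_iff_eq_neg]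
    tauto

lemma sum_pairCount : ∑ s, pairCount n s = #(quadResidues n) * #(quadNonresidues n) := by
  rw [← card_product]
  exact (card_eq_sum_card_fiberwise fun _ _ ↦ mem_univ _).symm

lemma pairCount_zero_of_isSquare (h : IsSquare (-1 : ZMod n)) : pairCount n 0 = 0 := by
  have hχ : quadraticChar (ZMod n) (-1) = 1 :=
    (quadraticChar_one_iff_isSquare (neg_ne_zero.mpr one_ne_zero)).mpr h
  refine card_eq_zero.mpr (filter_eq_empty_iff.mpr fun x hx hsum ↦ ?_)
  simp only [mem_product, mem_quadResidues, mem_quadNonresidues] at hx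
  rw [eq_neg_of_add_eq_zero_right hsum, neg_eq_neg_one_mul, map_mul, hχ, hx.1] at hx
  omega

lemma pairCount_zero_of_not_isSquare (h : ¬ IsSquare (-1 : ZMod n)) :
    pairCount n 0 = #(quadResidues n) := by
  have hχ : quadraticChar (ZMod n) (-1) = -1 := quadraticChar_neg_one_iff_not_isSquare.mpr h
  symm
  refine card_nbij' (fun a ↦ (a, -a)) Prod.fst (fun a ha ↦ ?_) (fun x hx ↦ ?_)
    (fun _ _ ↦ rfl) (fun x hx ↦ ?_)
  · rw [mem_coe, mem_quadResidues] at ha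
    have ha' : quadraticChar (ZMod n) (-a) = -1 := by
      rw [neg_eq_neg_one_mul, map_mul, hχ, ha, mul_one]
    simp only [coe_filter, Set.mem_ofPred_eq, mem_product, mem_quadResidues, mem_quadNonresidues,
      ha, ha', add_neg_cancel, and_self]
  · exact (mem_product.mp (mem_filter.mp hx).1).1
  · exact Prod.ext rfl (eq_neg_of_add_eq_zero_right (mem_filter.mp hx).2).symm

lemma pairCount_eq_pairCount_one {s : ZMod n} (hs : s ≠ 0) : pairCount n s = pairCount n 1 := by
  rw [← pairCount_mul hs 1, mul_one]

lemma pairCount_zero_add_mul_pairCount_one (hn : Odd n) :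
    pairCount n 0 + (n - 1) * pairCount n 1 = (n - 1) / 2 * ((n - 1) / 2) := by
  nth_rw 2 [← card_quadNonresidues hn]
  rw [← card_quadResidues hn, ← sum_pairCount, ← add_sum_erase _ _ (mem_univ 0),
    sum_congr rfl fun s hs ↦ pairCount_eq_pairCount_one (ne_of_mem_erase hs), sum_const,
    card_erase_of_mem (mem_univ _), card_univ, ZMod.card, smul_eq_mul]

lemma pairCount_zero_one_cases (hn : Odd n) : ∃ k : ℕ,
    (n = 4 * k + 1 ∧ pairCount n 0 = 0 ∧ pairCount n 1 = k) ∨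
    (n = 4 * k + 3 ∧ pairCount n 0 = 2 * k + 1 ∧ pairCount n 1 = k) := by
  have hsum := pairCount_zero_add_mul_pairCount_one hn
  have h3 : n ≠ 1 := (Fact.out : n.Prime).ne_one
  obtain ⟨k, hk | hk⟩ : ∃ k, n = 4 * k + 1 ∨ n = 4 * k + 3 := ⟨n / 4, by grind⟩
  · have hsq : IsSquare (-1 : ZMod n) := ZMod.exists_sq_eq_neg_one_iff.mpr (by omega)
    rw [pairCount_zero_of_isSquare hsq, show n - 1 = 4 * k by omega,
      show 4 * k / 2 = 2 * k by omega] at hsum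
    refine ⟨k, Or.inl ⟨hk, pairCount_zero_of_isSquare hsq, ?_⟩⟩
    exact Nat.eq_of_mul_eq_mul_left (show 0 < 4 * k by omega) (by linarith)
  · have hsq : ¬ IsSquare (-1 : ZMod n) := mt ZMod.exists_sq_eq_neg_one_iff.mp (by omega)
    have h0 : pairCount n 0 = 2 * k + 1 := by
      rw [pairCount_zero_of_not_isSquare hsq, card_quadResidues hn]; omega
    rw [h0, show n - 1 = 4 * k + 2 by omega, show (4 * k + 2) / 2 = 2 * k + 1 by omega] at hsum
    have : (2 * k + 1) * (2 * pairCount n 1 + 1) = (2 * k + 1) * (2 * k + 1) := by linarith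
    have := Nat.eq_of_mul_eq_mul_left (by omega) this
    exact ⟨k, Or.inr ⟨hk, h0, by omega⟩⟩

end PairCount

section Arithmetic

variable {R : Type*} [CommRing R] {n : ℕ} [Fact n.Prime]

variable (R n) in
def ArithLogUnitCondition : Prop :=
  (((n - 1) / 2 : ℕ) : R) ≠ 0 ∧ (pairCount n 0 : R) ≠ pairCount n 1

lemma ArithLogUnitCondition.of_injective {S : Type*} [CommRing S] {f : R →+* S} (hf : Injective f)
    (h : ArithLogUnitCondition R n) : ArithLogUnitCondition S n :=
  ⟨by simpa using hf.ne h.1, by simpa using hf.ne h.2⟩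

lemma arithLogUnitCondition_of_natCast_eq_zero [Nontrivial R] (hodd : Odd n) (hn : (n : R) = 0) :
    ArithLogUnitCondition R n := by
  obtain ⟨k, ⟨rfl, h0, h1⟩ | ⟨rfl, h0, h1⟩⟩ := pairCount_zero_one_cases hodd
  · rw [ArithLogUnitCondition, h0, h1, show (4 * k + 1 - 1) / 2 = 2 * k by omega]
    push_cast at hn ⊢
    exact ⟨fun h ↦ one_ne_zero (α := R) (by linear_combination hn - 2 * h),
      fun h ↦ one_ne_zero (α := R) (by linear_combination hn + 4 * h)⟩
  · rw [ArithLogUnitCondition, h0, h1, show (4 * k + 3 - 1) / 2 = 2 * k + 1 by omega]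
    push_cast at hn ⊢
    exact ⟨fun h ↦ one_ne_zero (α := R) (by linear_combination hn - 2 * h),
      fun h ↦ one_ne_zero (α := R) (by linear_combination 4 * h - hn)⟩

lemma arithLogUnitCondition_iff (q : ℕ) (hodd : Odd n)
    (hcop : ∀ m : ℕ, Nat.gcd q m = 1 ↔ (m : R) ≠ 0) :
    ArithLogUnitCondition R n ↔
      ((∃ k : ℕ, n = 4 * k + 3 ∧ Nat.gcd q (k + 1) = 1 ∧ Nat.gcd q (2 * k + 1) = 1) ∨
        (∃ k : ℕ, n = 4 * k + 1 ∧ Nat.gcd q (2 * k) = 1)) := by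
  simp only [hcop]
  obtain ⟨k, ⟨rfl, h0, h1⟩ | ⟨rfl, h0, h1⟩⟩ := pairCount_zero_one_cases hodd
  · have hne : ∀ j, ¬ 4 * k + 1 = 4 * j + 3 := by omega
    have heq : ∀ j, 4 * k + 1 = 4 * j + 1 ↔ k = j := by omega
    simp only [ArithLogUnitCondition, h0, h1, hne, heq, show (4 * k + 1 - 1) / 2 = 2 * k by omega,
      false_and, exists_false, false_or, exists_eq_left']
    refine and_iff_left_of_imp fun h hk ↦ h ?_
    rw [Nat.cast_mul, ← hk, Nat.cast_zero, mul_zero]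
  · have hne : ∀ j, ¬ 4 * k + 3 = 4 * j + 1 := by omega
    have heq : ∀ j, 4 * k + 3 = 4 * j + 3 ↔ k = j := by omega
    simp only [ArithLogUnitCondition, h0, h1, hne, heq,
      show (4 * k + 3 - 1) / 2 = 2 * k + 1 by omega, false_and, exists_false, or_false,
      exists_eq_left']
    have hsplit : ((2 * k + 1 : ℕ) : R) = k + ((k + 1 : ℕ) : R) := by push_cast; ring
    have hB : ((2 * k + 1 : ℕ) : R) ≠ k ↔ ((k + 1 : ℕ) : R) ≠ 0 := by
      rw [hsplit, Ne, Ne, add_eq_left]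
    rw [hB, and_comm]

end Arithmetic

section CharacterSums

variable {n : ℕ} [Fact n.Prime] {K : Type*} [Field K]

lemma sum_quadResidues_mul_sum_quadNonresidues {ψ : AddChar (ZMod n) K} (hψ : ψ ≠ 1) :
    (∑ a ∈ quadResidues n, ψ a) * (∑ b ∈ quadNonresidues n, ψ b) =
      (pairCount n 0 : K) - pairCount n 1 := by
  have hfiber : (∑ a ∈ quadResidues n, ψ a) * (∑ b ∈ quadNonresidues n, ψ b) =
      ∑ s, (pairCount n s : K) * ψ s := by
    rw [sum_mul_sum, ← sum_product', ← sum_fiberwise _ (fun x ↦ x.1 + x.2)]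
    refine sum_congr rfl fun s _ ↦ ?_
    rw [pairCount, ← nsmul_eq_mul, ← sum_const]
    exact sum_congr rfl fun x hx ↦ by rw [← AddChar.map_add_eq_mul, (mem_filter.mp hx).2]
  have hcenter : ∑ s, (pairCount n s : K) * ψ s =
      ∑ s, ((pairCount n s : K) - pairCount n 1) * ψ s := by
    simp only [sub_mul, sum_sub_distrib, ← mul_sum, AddChar.sum_eq_zero_of_ne_one hψ, mul_zero,
      sub_zero]
  rw [hfiber, hcenter, sum_eq_single 0 (fun s _ hs ↦ by
    rw [pairCount_eq_pairCount_one hs, sub_self, zero_mul]) (by simp), AddChar.map_zero_eq_one,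
    mul_one]

lemma sum_quadNonresidues_mulShift {b : ZMod n} (hb : quadraticChar (ZMod n) b = -1)
    (ψ : AddChar (ZMod n) K) :
    ∑ a ∈ quadNonresidues n, ψ.mulShift b a = ∑ a ∈ quadResidues n, ψ a := by
  have hb0 : b ≠ 0 := by rintro rfl; simp at hb
  refine sum_equiv (Equiv.mulLeft₀ b hb0) (fun a ↦ ?_)
    (fun a _ ↦ by simp [AddChar.mulShift_apply])
  simp only [mem_quadResidues, mem_quadNonresidues, Equiv.mulLeft₀_apply, map_mul, hb]
  omega

lemma sum_quadNonresidues_ne_zero (hodd : Odd n) (ψ : AddChar (ZMod n) K)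
    (h : ArithLogUnitCondition K n) : ∑ a ∈ quadNonresidues n, ψ a ≠ 0 := by
  by_cases hψ : ψ = 1
  · simpa [hψ, card_quadNonresidues hodd] using h.1
  · intro h0
    apply h.2
    rw [← sub_eq_zero, ← sum_quadResidues_mul_sum_quadNonresidues hψ, h0, mul_zero]

lemma exists_sum_quadNonresidues_eq_zero (hodd : Odd n) {ψ : AddChar (ZMod n) K} (hψ : ψ ≠ 1)
    (hpc : (pairCount n 0 : K) = pairCount n 1) :
    ∃ ψ' : AddChar (ZMod n) K, ∑ a ∈ quadNonresidues n, ψ' a = 0 := by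
  rw [← sub_eq_zero, ← sum_quadResidues_mul_sum_quadNonresidues hψ] at hpc
  rcases mul_eq_zero.mp hpc with h | h
  -- twisting by a nonresidue exchanges residues and nonresidues
  · obtain ⟨b, hb⟩ := exists_quadraticChar_eq_neg_one hodd
    exact ⟨ψ.mulShift b, by rw [sum_quadNonresidues_mulShift hb, h]⟩
  · exact ⟨ψ, h⟩

end CharacterSums

section ArithmeticLogarithm

open AddMonoidAlgebra

variable (F : Type) [Field F] (n : ℕ) [Fact n.Prime]

noncomputable def arithLog : F[ZMod n] := ∑ a ∈ quadNonresidues n, single a 1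

variable {F n}

lemma coeffFunEquiv_arithLog {v : ZMod n → F}
    (hv : ∀ a : ZMod n, v a = if a ≠ 0 ∧ ¬ ∃ b : ZMod n, b ^ 2 = a then 1 else 0) :
    coeffFunEquiv F n (arithLog F n) = v := by
  funext a
  have : (a ≠ 0 ∧ ¬ ∃ b : ZMod n, b ^ 2 = a) ↔ a ∈ quadNonresidues n := by
    rw [mem_quadNonresidues, quadraticChar_neg_one_iff_not_isSquare, isSquare_iff_exists_sq]
    simp only [eq_comm (a := a), and_iff_right_iff_imp]
    rintro h rfl
    exact h ⟨0, zero_pow two_ne_zero⟩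
  rw [hv, if_congr this rfl rfl]
  simp [coeffFunEquiv, arithLog]

lemma isUnit_arithLog_iff_forall_addChar :
    IsUnit (arithLog F n) ↔ ∀ (K : Type) [Field K] [Algebra F K] (ψ : AddChar (ZMod n) K),
      ∑ a ∈ quadNonresidues n, ψ a ≠ 0 := by
  simp [isUnit_iff_forall_lift_ne_zero, arithLog, lift_single]

lemma isUnit_arithLog (hodd : Odd n) (h : ArithLogUnitCondition F n) : IsUnit (arithLog F n) :=
  isUnit_arithLog_iff_forall_addChar.mpr fun K _ _ ψ ↦
    sum_quadNonresidues_ne_zero hodd ψ (h.of_injective (algebraMap F K).injective)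

lemma isUnit_arithLog_iff (hodd : Odd n) (hn : (n : F) ≠ 0) :
    IsUnit (arithLog F n) ↔ ArithLogUnitCondition F n := by
  refine ⟨fun h ↦ ⟨?_, fun hpc ↦ ?_⟩, isUnit_arithLog hodd⟩
  · simpa [card_quadNonresidues hodd] using isUnit_arithLog_iff_forall_addChar.mp h F 1
  · let χ := AddChar.primitiveZModChar ⟨n, (Fact.out : n.Prime).pos⟩ F hn
    let ψ : AddChar (ZMod n) (CyclotomicField _ F) := χ.char
    have hψ : ψ ≠ 1 := by
      have h1 : ψ.mulShift 1 ≠ 1 := χ.prim (one_ne_zero : (1 : ZMod n) ≠ 0)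
      rwa [AddChar.mulShift_one] at h1
    obtain ⟨ψ', hψ'⟩ :=
      exists_sum_quadNonresidues_eq_zero hodd hψ (by simpa using congrArg (algebraMap F _) hpc)
    exact isUnit_arithLog_iff_forall_addChar.mp h _ ψ' hψ'

end ArithmeticLogarithm

/-- Theorem 1: the arithmetic logarithm (indicator of quadratic nonresidues
mod an odd prime `n`, extended by `0` elsewhere) is a most complicated point for every
translation-invariant linear operator on `F_q^n` iff either `n = 4k+3` with
`gcd(q,k+1) = gcd(q,2k+1) = 1`, or `n = 4k+1` with `gcd(q,2k) = 1`. -/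
theorem stmt3 (p d q n : ℕ) (hp : p.Prime) (hd : 0 < d) (hq : q = p ^ d)
    [Fact n.Prime] (hodd : Odd n)
    (F : Type) [Field F] [Fintype F] (hF : Fintype.card F = q)
    (v : ZMod n → F)
    (hv : ∀ a : ZMod n, v a = if a ≠ 0 ∧ ¬ ∃ b : ZMod n, b ^ 2 = a then 1 else 0) :
    (∀ A : (ZMod n → F) →ₗ[F] (ZMod n → F),
        A ∘ₗ shiftOp F n = shiftOp F n ∘ₗ A →
        MostComplicated (fun y : ZMod n → F => A y) v)
      ↔ ((∃ k : ℕ, n = 4 * k + 3 ∧ Nat.gcd q (k + 1) = 1 ∧ Nat.gcd q (2 * k + 1) = 1) ∨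
         (∃ k : ℕ, n = 4 * k + 1 ∧ Nat.gcd q (2 * k) = 1)) := by
  have : Fact p.Prime := ⟨hp⟩
  have : CharP F p := charP_of_card_eq_prime_pow (hF.trans hq)
  have hcop : ∀ m : ℕ, Nat.gcd q m = 1 ↔ (m : F) ≠ 0 := fun m ↦ by
    rw [← Nat.coprime_iff_gcd_eq_one, hq, Nat.coprime_pow_left_iff hd, hp.coprime_iff_not_dvd, Ne,
      CharP.cast_eq_zero_iff F p]
  rw [← arithLogUnitCondition_iff q hodd hcop, ← coeffFunEquiv_arithLog hv]
  by_cases hn : (n : F) = 0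
  -- `F[ℤ/n]` is then not semisimple, but `arithLog` is a unit anyway
  · have hcond := arithLogUnitCondition_of_natCast_eq_zero hodd hn
    exact iff_of_true
      (fun A hA ↦ mostComplicated_of_isUnit (isUnit_arithLog hodd hcond) A hA) hcond
  · rw [← isUnit_arithLog_iff hodd hn]
    exact ⟨isUnit_of_forall_mostComplicated hn, fun h A hA ↦ mostComplicated_of_isUnit h A hA⟩
end

section
/- Let q be a prime power and n ≥ 1 with gcd(n, q) = 1. Let x : ZMod n → F_q and F(y) = ∑_{i ∈ ZMod n} x(i) y^{val(i)} ∈ F_q[y]. If gcd(F(y), ∑_{i=0}^{n−1} y^i) = 1 in F_q[y], then x is a most complicated or almost most complicated point for every linear operator A on F_q^n of the form A = B·Δ with B a translation-invariant linear operator. -/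
open Function Polynomial Finset

/-!
Identify `F^n` with `F[y]/(y^n - 1)` through `x ↦ F(y)`, where `y` acts as the inverse shift
`δ⁻¹ = δ^(n-1)`. A translation-invariant `B` is multiplication by some `p(y)`, so `A = BΔ` is
multiplication by `a = p(y)(y^(n-1) - 1)`, and `A^(s+t) x = A^s x` means
`y^n - 1 ∣ a^s (a^t - 1) F`. Since `gcd(n, q) = 1`, `y^n - 1` is squarefree, so `a^s w ≡ 0`
already gives `a w ≡ 0`: every point has preperiod at most `1`, and `A^(1+t)` fixes the image
of `A` as soon as `a (a^t - 1) ≡ 0`. Writing `y^n - 1 = (y - 1) g`, the factor `y - 1` of `a`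
gives `a g ≡ 0`, and as `F` is invertible modulo `g`, every return time `t` of `x` satisfies
`a (a^t - 1) ≡ 0`. So the period of `x` is maximal, and its preperiod `0` or `1` gives the two
cases.
-/

section Orbits

variable {S : Type*} {T : S → S} {x : S} {s t : ℕ}

lemma orbitPeriod_le (ht : 1 ≤ t) (h : T^[s + t] x = T^[s] x) : orbitPeriod T x ≤ t :=
  Nat.sInf_le ⟨ht, s, h⟩

lemma orbitPreperiod_le (ht : 1 ≤ t) (h : T^[s + t] x = T^[s] x) : orbitPreperiod T x ≤ s :=
  Nat.sInf_le ⟨t, ht, h⟩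

lemma exists_iterate_add_orbitPeriod (ht : 1 ≤ t) (h : T^[s + t] x = T^[s] x) :
    1 ≤ orbitPeriod T x ∧ ∃ s, T^[s + orbitPeriod T x] x = T^[s] x :=
  Nat.sInf_mem (s := {t | 1 ≤ t ∧ ∃ s, T^[s + t] x = T^[s] x}) ⟨t, ht, s, h⟩

lemma mostComplicated_or_almostMostComplicated [Fintype S]
    (hper : ∀ y, orbitPeriod T y ≤ orbitPeriod T x) (hpre : ∀ y, orbitPreperiod T y ≤ 1) :
    MostComplicated T x ∨ AlmostMostComplicated T x := by
  have hper_eq : orbitPeriod T x = univ.sup fun y => orbitPeriod T y :=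
    le_antisymm (le_sup (mem_univ x)) (Finset.sup_le fun y _ => hper y)
  have hx_le : orbitPreperiod T x ≤ univ.sup fun y => orbitPreperiod T y :=
    le_sup (f := fun y => orbitPreperiod T y) (mem_univ x)
  have hsup_le : (univ.sup fun y => orbitPreperiod T y) ≤ 1 := Finset.sup_le fun y _ => hpre y
  -- for preperiod `0`, the maximal preperiod minus one truncates to `0`
  rcases Nat.le_one_iff_eq_zero_or_eq_one.mp (hpre x) with h | h
  · exact Or.inr ⟨hper_eq, by omega⟩
  · exact Or.inl ⟨hper_eq, by omega⟩

end Orbits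

section Divisibility

variable {R : Type*} [CommRing R] {m a b f g : R}

lemma IsRadical.dvd_mul_of_dvd_pow_mul (hm : IsRadical m) {s : ℕ} (h : m ∣ a ^ s * b) :
    m ∣ a * b :=
  hm (s + 1) _ <| (h.mul_right (a * b ^ s)).trans (dvd_of_eq (by ring))

lemma IsRadical.exists_dvd_mul_pow_sub_one (hm : IsRadical m) [Finite (R ⧸ Ideal.span {m})]
    (a : R) : ∃ t, 1 ≤ t ∧ m ∣ a * (a ^ t - 1) := by
  obtain ⟨i, j, hij, hpow⟩ := Finite.exists_ne_map_eq_of_infinite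
    fun k : ℕ => Ideal.Quotient.mk (Ideal.span {m}) (a ^ k)
  wlog hlt : i < j generalizing i j
  · exact this j i hij.symm hpow.symm (by omega)
  refine ⟨j - i, by omega, hm.dvd_mul_of_dvd_pow_mul (s := i) ?_⟩
  rw [← Ideal.mem_span_singleton, ← Ideal.Quotient.eq_zero_iff_mem]
  simp only [map_sub, map_pow, mul_sub, ← pow_add, mul_one]
  rw [Nat.add_sub_cancel' hlt.le]
  simpa [sub_eq_zero] using hpow.symm

lemma IsCoprime.dvd_of_dvd_mul_of_dvd_mul (hfg : IsCoprime f g) (hag : m ∣ a * g) (hab : a ∣ b)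
    (h : m ∣ b * f) : m ∣ b := by
  obtain ⟨u, v, huv⟩ := hfg
  obtain ⟨c, rfl⟩ := hab
  have : a * c = u * (a * c * f) + v * c * (a * g) := by linear_combination -(a * c) * huv
  rw [this]
  exact dvd_add (h.mul_left u) (hag.mul_left _)

lemma pow_sub_one_dvd_pow_sub_one_mul_geom_sum (x : R) (n k : ℕ) :
    x ^ n - 1 ∣ (x ^ k - 1) * ∑ i ∈ range n, x ^ i := by
  obtain ⟨c, hc⟩ := sub_one_dvd_pow_sub_one x k
  exact ⟨c, by rw [← geom_sum_mul x n, hc]; ring⟩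

end Divisibility

lemma natCast_ne_zero_of_coprime_card {R : Type*} [CommRing R] [Fintype R] [Nontrivial R] {n : ℕ}
    (h : Nat.Coprime n (Fintype.card R)) : (n : R) ≠ 0 := by
  have := (Nat.isCoprime_iff_coprime.mpr h).map (Int.castRingHom R)
  simp only [eq_intCast, Int.cast_natCast, Nat.cast_card_eq_zero,
    isCoprime_zero_right] at this
  exact this.ne_zero

lemma Polynomial.isRadical_X_pow_sub_one {F : Type*} [Field F] {n : ℕ} (hn : (n : F) ≠ 0) :
    IsRadical (X ^ n - 1 : F[X]) := by
  simpa using (separable_X_pow_sub_C (1 : F) hn one_ne_zero).squarefree.isRadical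

lemma Polynomial.commute_aeval {R A : Type*} [CommSemiring R] [Semiring A] [Algebra R A]
    {a b : A} (h : Commute a b) (p : R[X]) : Commute (aeval a p) b := by
  induction p using Polynomial.induction_on' with
  | add p q hp hq => rw [map_add]; exact hp.add_left hq
  | monomial k c =>
    rw [aeval_monomial]
    exact (Algebra.commute_algebraMap_left c b).mul_left (h.pow_left k)

section CyclicShift

variable {F : Type*} [Field F] {n : ℕ}

def shiftInv (F : Type*) [Field F] (n : ℕ) : (ZMod n → F) →ₗ[F] (ZMod n → F) where
  toFun x := fun i => x (i - 1)
  map_add' _ _ := rfl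
  map_smul' _ _ := rfl

lemma shiftOp_pow_apply (k : ℕ) (z : ZMod n → F) (i : ZMod n) :
    (shiftOp F n ^ k) z i = z (i + k) := by
  induction k generalizing z i with
  | zero => simp
  | succ k ih =>
    rw [pow_succ, Module.End.mul_apply, ih]
    show z (i + k + 1) = _
    push_cast; ring_nf

lemma shiftInv_pow_apply (k : ℕ) (z : ZMod n → F) (i : ZMod n) :
    (shiftInv F n ^ k) z i = z (i - k) := by
  induction k generalizing z i with
  | zero => simp
  | succ k ih =>
    rw [pow_succ, Module.End.mul_apply, ih]
    show z (i - k - 1) = _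
    push_cast; ring_nf

lemma aeval_shiftInv_X_pow_sub_one : aeval (shiftInv F n) (X ^ n - 1 : F[X]) = 0 := by
  refine LinearMap.ext fun z => funext fun i => ?_
  simp [shiftInv_pow_apply]

variable [NeZero n]

noncomputable def vecToPoly (z : ZMod n → F) : F[X] := ∑ i : ZMod n, C (z i) * X ^ i.val

lemma ZMod.natCast_pred_self : ((n - 1 : ℕ) : ZMod n) = -1 := by
  rw [Nat.cast_pred (Nat.pos_of_neZero n), ZMod.natCast_self, zero_sub]

lemma shiftOp_pow_pred : shiftOp F n ^ (n - 1) = shiftInv F n := by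
  refine LinearMap.ext fun z => funext fun i => ?_
  rw [shiftOp_pow_apply, ZMod.natCast_pred_self, ← sub_eq_add_neg]
  rfl

lemma shiftInv_pow_pred : shiftInv F n ^ (n - 1) = shiftOp F n := by
  refine LinearMap.ext fun z => funext fun i => ?_
  rw [shiftInv_pow_apply, ZMod.natCast_pred_self, sub_neg_eq_add]
  rfl

lemma aeval_vecToPoly_single (z : ZMod n → F) :
    aeval (shiftInv F n) (vecToPoly z) (Pi.single 0 1) = z := by
  ext j
  simp [vecToPoly, Module.algebraMap_end_apply, shiftInv_pow_apply, Pi.single_apply, sub_eq_zero]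

lemma vecToPoly_coeff_val {r : F[X]} (hr : r.natDegree < n) :
    vecToPoly (n := n) (fun i => r.coeff i.val) = r := by
  conv_rhs => rw [r.as_sum_range_C_mul_X_pow' hr]
  exact Finset.sum_nbij (·.val) (fun i _ => mem_range.2 i.val_lt) (ZMod.val_injective n).injOn
    (fun k hk => ⟨k, mem_univ _, ZMod.val_cast_of_lt (mem_range.1 hk)⟩) (fun _ _ => rfl)

lemma Polynomial.monic_X_pow_sub_one : (X ^ n - 1 : F[X]).Monic := by
  simpa using monic_X_pow_sub_C (1 : F) (NeZero.ne n)

lemma Polynomial.natDegree_modByMonic_X_pow_sub_one_lt (r : F[X]) :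
    (r %ₘ (X ^ n - 1)).natDegree < n := by
  have hdeg : (X ^ n - 1 : F[X]).natDegree = n := by
    simpa using natDegree_X_pow_sub_C (r := (1 : F))
  refine lt_of_lt_of_eq (natDegree_modByMonic_lt r monic_X_pow_sub_one fun h => ?_) hdeg
  simp only [h, natDegree_one] at hdeg
  exact NeZero.ne n hdeg.symm

lemma aeval_single_eq_coeff_modByMonic (r : F[X]) :
    aeval (shiftInv F n) r (Pi.single 0 1) = fun i => (r %ₘ (X ^ n - 1)).coeff i.val := calc
  _ = aeval (shiftInv F n) (r %ₘ (X ^ n - 1)) (Pi.single 0 1) := by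
    conv_lhs => rw [← modByMonic_add_div r (X ^ n - 1)]
    rw [map_add, map_mul, aeval_shiftInv_X_pow_sub_one, zero_mul, add_zero]
  _ = _ := by
    rw [← aeval_vecToPoly_single (fun i => (r %ₘ (X ^ n - 1)).coeff i.val),
      vecToPoly_coeff_val (natDegree_modByMonic_X_pow_sub_one_lt r)]

lemma aeval_single_eq_zero_iff (r : F[X]) :
    aeval (shiftInv F n) r (Pi.single 0 1) = 0 ↔ X ^ n - 1 ∣ r := by
  rw [← modByMonic_eq_zero_iff_dvd monic_X_pow_sub_one, aeval_single_eq_coeff_modByMonic]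
  refine ⟨fun h => ?_, fun h => funext fun i => by simp [h]⟩
  rw [← vecToPoly_coeff_val (natDegree_modByMonic_X_pow_sub_one_lt r), h]
  simp [vecToPoly]

lemma aeval_eq_zero_iff (r : F[X]) (z : ZMod n → F) :
    aeval (shiftInv F n) r z = 0 ↔ X ^ n - 1 ∣ r * vecToPoly z := by
  rw [← aeval_single_eq_zero_iff, map_mul, Module.End.mul_apply, aeval_vecToPoly_single]

lemma exists_eq_aeval_of_commute {B : (ZMod n → F) →ₗ[F] (ZMod n → F)}
    (hB : Commute (shiftOp F n) B) : ∃ p : F[X], B = aeval (shiftInv F n) p := by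
  have hcomm (r : F[X]) : Commute (aeval (shiftInv F n) r) B :=
    commute_aeval (shiftOp_pow_pred (F := F) (n := n) ▸ hB.pow_left (n - 1)) r
  refine ⟨vecToPoly (B (Pi.single 0 1)), LinearMap.ext fun z => ?_⟩
  conv_lhs => rw [← aeval_vecToPoly_single z]
  rw [← Module.End.mul_apply, ← (hcomm _).eq, Module.End.mul_apply,
    ← aeval_vecToPoly_single (B (Pi.single 0 1)), ← Module.End.mul_apply, ← map_mul, mul_comm,
    map_mul, Module.End.mul_apply, aeval_vecToPoly_single, aeval_vecToPoly_single]

lemma finite_quotient_X_pow_sub_one [Finite F] :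
    Finite (F[X] ⧸ Ideal.span {(X ^ n - 1 : F[X])}) :=
  have : Module.Finite F (AdjoinRoot (X ^ n - 1 : F[X])) :=
    (AdjoinRoot.powerBasis' monic_X_pow_sub_one).finite
  Module.finite_of_finite F (M := AdjoinRoot (X ^ n - 1 : F[X]))

lemma iterate_aeval_add_eq_iff (a : F[X]) (z : ZMod n → F) (s t : ℕ) :
    (aeval (shiftInv F n) a)^[s + t] z = (aeval (shiftInv F n) a)^[s] z ↔
      X ^ n - 1 ∣ a ^ s * (a ^ t - 1) * vecToPoly z := by
  rw [← Module.End.pow_apply, ← Module.End.pow_apply, ← sub_eq_zero, ← LinearMap.sub_apply,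
    ← map_pow, ← map_pow, ← map_sub, aeval_eq_zero_iff, pow_add, mul_sub, mul_one]

end CyclicShift

theorem stmt7_general (q n : ℕ) [NeZero n] (hnq : Nat.gcd n q = 1)
    (F : Type) [Field F] [Fintype F] (hF : Fintype.card F = q)
    (x : ZMod n → F)
    (hx : IsCoprime (∑ i : ZMod n, C (x i) * X ^ i.val)
        (∑ i ∈ Finset.range n, (X : Polynomial F) ^ i)) :
    ∀ B : (ZMod n → F) →ₗ[F] (ZMod n → F),
      B ∘ₗ shiftOp F n = shiftOp F n ∘ₗ B →
      MostComplicated (fun y : ZMod n → F => (B ∘ₗ (shiftOp F n - LinearMap.id)) y) x ∨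
      AlmostMostComplicated (fun y : ZMod n → F => (B ∘ₗ (shiftOp F n - LinearMap.id)) y) x := by
  intro B hB
  obtain ⟨p, rfl⟩ := exists_eq_aeval_of_commute hB.symm
  set a : F[X] := p * (X ^ (n - 1) - 1)
  have hT : aeval (shiftInv F n) p ∘ₗ (shiftOp F n - LinearMap.id) = aeval (shiftInv F n) a := by
    rw [map_mul, map_sub, map_pow, aeval_X, shiftInv_pow_pred, map_one, Module.End.mul_eq_comp,
      Module.End.one_eq_id]
  rw [hT]
  have hrad : IsRadical (X ^ n - 1 : F[X]) :=
    isRadical_X_pow_sub_one (natCast_ne_zero_of_coprime_card (hF ▸ hnq))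
  have hag : X ^ n - 1 ∣ a * ∑ i ∈ range n, (X : F[X]) ^ i := by
    rw [mul_assoc]
    exact (pow_sub_one_dvd_pow_sub_one_mul_geom_sum X n (n - 1)).mul_left p
  have hreturn (t : ℕ) (z : ZMod n → F) (h : X ^ n - 1 ∣ a * (a ^ t - 1)) :
      (aeval (shiftInv F n) a)^[1 + t] z = (aeval (shiftInv F n) a)^[1] z := by
    rw [iterate_aeval_add_eq_iff, pow_one]
    exact h.mul_right _
  have := finite_quotient_X_pow_sub_one (F := F) (n := n)
  obtain ⟨t₀, ht₀, hdvd⟩ := hrad.exists_dvd_mul_pow_sub_one a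
  obtain ⟨ht, s, hs⟩ := exists_iterate_add_orbitPeriod ht₀ (hreturn t₀ x hdvd)
  refine mostComplicated_or_almostMostComplicated (fun z => orbitPeriod_le ht (hreturn _ z ?_))
    (fun z => orbitPreperiod_le ht₀ (hreturn t₀ z hdvd))
  rw [iterate_aeval_add_eq_iff, mul_assoc] at hs
  have hx' : IsCoprime (vecToPoly x) (∑ i ∈ range n, (X : F[X]) ^ i) := hx
  exact hx'.dvd_of_dvd_mul_of_dvd_mul hag (dvd_mul_right a _)
    (by simpa only [mul_assoc] using hrad.dvd_mul_of_dvd_pow_mul hs)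

/-- Lemma 3, first part: if `gcd(F(y), 1+y+⋯+y^{n-1}) = 1`, then `x` is a
most complicated or almost most complicated point for every operator of the form `B·Δ`
with `B` translation-invariant. -/
theorem stmt7 (q n : ℕ) (hq : IsPrimePow q) [NeZero n] (hnq : Nat.gcd n q = 1)
    (F : Type) [Field F] [Fintype F] (hF : Fintype.card F = q)
    (x : ZMod n → F)
    (hx : IsCoprime (∑ i : ZMod n, C (x i) * X ^ i.val)
        (∑ i ∈ Finset.range n, (X : Polynomial F) ^ i)) :
    ∀ B : (ZMod n → F) →ₗ[F] (ZMod n → F),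
      B ∘ₗ shiftOp F n = shiftOp F n ∘ₗ B →
      MostComplicated (fun y : ZMod n → F => (B ∘ₗ (shiftOp F n - LinearMap.id)) y) x ∨
      AlmostMostComplicated (fun y : ZMod n → F => (B ∘ₗ (shiftOp F n - LinearMap.id)) y) x :=
  stmt7_general q n hnq F hF x hx
end
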